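/- There exists a constant C, independent of ε and N, such that ‖∇(u − u^I)‖_{L^1(Ω_1)} ≤ C N^{-1} ln N, where the gradient of the piecewise bilinear interpolant is taken rectangle-by-rectangle. -/

import Mathlib

open MeasureTheory Real Set

noncomputable section

/-- First-order partial derivative in the x-direction. -/
def pdx (f : ℝ × ℝ → ℝ) : ℝ × ℝ → ℝ := fun p => fderiv ℝ f p (1, 0)

/-- First-order partial derivative in the y-direction. -/
def pdy (f : ℝ × ℝ → ℝ) : ℝ × ℝ → ℝ := fun p => fderiv ℝ f p (0, 1)

/-- Mixed partial derivative `∂_x^i ∂_y^j`. -/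
def pd (i j : ℕ) (f : ℝ × ℝ → ℝ) : ℝ × ℝ → ℝ := pdx^[i] (pdy^[j] f)

/-- A function coincides with a bilinear polynomial `a + bx + cy + dxy` on a set. -/
def IsBilinearOn (f : ℝ × ℝ → ℝ) (s : Set (ℝ × ℝ)) : Prop :=
  ∃ a b c d : ℝ, ∀ p ∈ s, f p = a + b * p.1 + c * p.2 + d * (p.1 * p.2)

/-- The Shishkin-mesh node abscissas. -/
def meshX (N : ℕ) (lx : ℝ) (i : ℕ) : ℝ :=
  if i ≤ N / 2 then 2 * (i : ℝ) * (1 - lx) / (N : ℝ)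
  else 1 - 2 * ((N : ℝ) - (i : ℝ)) * lx / (N : ℝ)

/-- The Shishkin-mesh node ordinates. -/
def meshY (N : ℕ) (ly : ℝ) (j : ℕ) : ℝ :=
  if j ≤ N / 3 then 3 * (j : ℝ) * ly / (N : ℝ)
  else if j ≤ 2 * N / 3 then
    (3 * (j : ℝ) / (N : ℝ) - 1) - 3 * (2 * (j : ℝ) - (N : ℝ)) * ly / (N : ℝ)
  else 1 - 3 * ((N : ℝ) - (j : ℝ)) * ly / (N : ℝ)

/-- The mesh rectangle `τ_{ij} = [x_{i-1}, x_i] × [y_{j-1}, y_j]`. -/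
def meshRect (N : ℕ) (lx ly : ℝ) (i j : ℕ) : Set (ℝ × ℝ) :=
  Icc (meshX N lx (i - 1)) (meshX N lx i) ×ˢ Icc (meshY N ly (j - 1)) (meshY N ly j)

def OmegaS (lx ly : ℝ) : Set (ℝ × ℝ) := Icc 0 (1 - lx) ×ˢ Icc ly (1 - ly)
def Omega1R (lx ly : ℝ) : Set (ℝ × ℝ) := Icc (1 - lx) 1 ×ˢ Icc ly (1 - ly)
def Omega2R (lx ly : ℝ) : Set (ℝ × ℝ) := Icc 0 (1 - lx) ×ˢ (Icc 0 ly ∪ Icc (1 - ly) 1)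
def Omega12R (lx ly : ℝ) : Set (ℝ × ℝ) := Icc (1 - lx) 1 ×ˢ (Icc 0 ly ∪ Icc (1 - ly) 1)

/-- Basic assumptions on the Shishkin mesh data (with `ρ = 2.5`). -/
def ShishkinHyp (N : ℕ) (ε β lx ly : ℝ) : Prop :=
  0 < N ∧ 6 ∣ N ∧ 0 < ε ∧ ε ≤ (N : ℝ)⁻¹ ∧ 0 < β ∧
  lx = 2.5 * ε / β * Real.log (N : ℝ) ∧ ly = 2.5 * Real.sqrt ε * Real.log (N : ℝ) ∧
  lx ≤ 1 / 2 ∧ ly ≤ 1 / 4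

/-- `gI` is the piecewise-bilinear nodal interpolant of `g` on the Shishkin mesh. -/
def IsMeshInterpolant (N : ℕ) (lx ly : ℝ) (g gI : ℝ × ℝ → ℝ) : Prop :=
  Continuous gI ∧
  (∀ i j : ℕ, 1 ≤ i → i ≤ N → 1 ≤ j → j ≤ N → IsBilinearOn gI (meshRect N lx ly i j)) ∧
  (∀ i j : ℕ, i ≤ N → j ≤ N →
    gI (meshX N lx i, meshY N ly j) = g (meshX N lx i, meshY N ly j))

def UnitSq : Set (ℝ × ℝ) := Icc 0 1 ×ˢ Icc 0 1

/-- Bounds on the regular part `S` of the solution decomposition. -/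
def BoundS (C0 : ℝ) (S : ℝ × ℝ → ℝ) : Prop :=
  ContDiff ℝ 3 S ∧ ∀ i j : ℕ, i + j ≤ 3 → ∀ p ∈ UnitSq, |pd i j S p| ≤ C0

/-- Bounds on the exponential-layer part `E₁`. -/
def BoundE1 (ε β C0 : ℝ) (E1 : ℝ × ℝ → ℝ) : Prop :=
  ContDiff ℝ 3 E1 ∧ ∀ i j : ℕ, i + j ≤ 3 → ∀ p ∈ UnitSq,
    |pd i j E1 p| ≤ C0 * ε ^ (-(i : ℝ)) * Real.exp (-β * (1 - p.1) / ε)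

/-- Bounds on the characteristic-layer part `E₂`. -/
def BoundE2 (ε C0 : ℝ) (E2 : ℝ × ℝ → ℝ) : Prop :=
  ContDiff ℝ 3 E2 ∧ ∀ i j : ℕ, i + j ≤ 3 → ∀ p ∈ UnitSq,
    |pd i j E2 p| ≤ C0 * ε ^ (-(j : ℝ) / 2) *
      (Real.exp (-p.2 / Real.sqrt ε) + Real.exp (-(1 - p.2) / Real.sqrt ε))

/-- Bounds on the corner-layer part `E₁₂`. -/
def BoundE12 (ε β C0 : ℝ) (E12 : ℝ × ℝ → ℝ) : Prop :=
  ContDiff ℝ 3 E12 ∧ ∀ i j : ℕ, i + j ≤ 3 → ∀ p ∈ UnitSq,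
    |pd i j E12 p| ≤ C0 * ε ^ (-((i : ℝ) + (j : ℝ) / 2)) * Real.exp (-β * (1 - p.1) / ε) *
      (Real.exp (-p.2 / Real.sqrt ε) + Real.exp (-(1 - p.2) / Real.sqrt ε))

/-- Membership in the bilinear finite element space `V^N`. -/
def MemVN (N : ℕ) (lx ly : ℝ) (v : ℝ × ℝ → ℝ) : Prop :=
  Continuous v ∧
  (∀ p ∈ UnitSq, (p.1 = 0 ∨ p.1 = 1 ∨ p.2 = 0 ∨ p.2 = 1) → v p = 0) ∧
  ∀ i j : ℕ, 1 ≤ i → i ≤ N → 1 ≤ j → j ≤ N → IsBilinearOn v (meshRect N lx ly i j)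

/-- The SDFEM stabilization parameter `δ`. -/
def sdDelta (N : ℕ) (lx ly Cstar : ℝ) : ℝ × ℝ → ℝ :=
  (OmegaS lx ly ∪ Omega2R lx ly).indicator fun _ => Cstar / (N : ℝ)

/-- The SDFEM bilinear form `B`. -/
def Bform (N : ℕ) (lx ly ε b c Cstar : ℝ) (v w : ℝ × ℝ → ℝ) : ℝ :=
  ∫ p in UnitSq,
    (ε * (pdx v p * pdx w p + pdy v p * pdy w p)
      + (b * pdx v p + c * v p) * w p
      + (b * pdx v p + c * v p) * (sdDelta N lx ly Cstar p * (b * pdx w p)))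

/-- The square of the SDFEM energy norm `|||·|||`. -/
def energySq (N : ℕ) (lx ly ε b c Cstar : ℝ) (v : ℝ × ℝ → ℝ) : ℝ :=
  ∫ p in UnitSq,
    ((ε + b ^ 2 * sdDelta N lx ly Cstar p) * pdx v p ^ 2
      + ε * pdy v p ^ 2 + c * v p ^ 2)

/-- The neighbourhood `Ω₀` of the point `(xs, ys)`. -/
def OmegaZero (N : ℕ) (xs ys K sx sy : ℝ) : Set (ℝ × ℝ) :=
  {p : ℝ × ℝ | p ∈ Ioo (0 : ℝ) 1 ×ˢ Ioo (0 : ℝ) 1 ∧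
    p.1 - xs ≤ K * sx * Real.log (N : ℝ) ∧ |p.2 - ys| ≤ K * sy * Real.log (N : ℝ)}

/-- `Ω₀'`: the smallest union of mesh rectangles containing `Ω₀`. -/
def OmegaZero' (N : ℕ) (lx ly xs ys K sx sy : ℝ) : Set (ℝ × ℝ) :=
  ⋃ i ∈ Finset.Icc 1 N, ⋃ j ∈ Finset.Icc 1 N,
    ⋃ (_ : volume (OmegaZero N xs ys K sx sy ∩ meshRect N lx ly i j) ≠ 0),
      meshRect N lx ly i j

/-!
On a mesh cell `τ ⊆ Ω₁` the interpolant `u^I` is bilinear and agrees with `u` at the corners,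
so the mean value theorem along the two horizontal edges puts `∂ₓu^I` at an interior point
between two values of `∂ₓu` on `τ`; likewise for `∂ᵧ`. Hence `|∂ₓ(u - u^I)|` is bounded by the
oscillation of `∂ₓu` on `τ` and `|∂ᵧ(u - u^I)|` by `2 sup_τ |∂ᵧu|`. In the decomposition of `u`,
the oscillation of `∂ₓE₁` is controlled by its second derivatives times the cell sizes
`2λ_x/N` and `3(1 - 2λ_y)/N`; across a cell `e^{-β(1-x)/ε}` grows by at most
`e^{2βλ_x/(εN)} ≤ e⁵`, and on `Ω₁` the characteristic-layer factor is at most `2N^{-5/2}`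
because `y, 1 - y ≥ λ_y`. Off the (null) mesh lines this gives
`|∇(u - u^I)| ≤ (εN)⁻¹ (C + C' ln N e^{-β(1-x)/ε})`, and integrating over `Ω₁`, of width
`λ_x = O(ε ln N)`, with `∫ e^{-β(1-x)/ε} dx ≤ ε/β`, yields `C'' N⁻¹ ln N`.
-/
lemma DifferentiableAt.hasDerivAt_pdx {f : ℝ × ℝ → ℝ} {x y : ℝ}
    (hf : DifferentiableAt ℝ f (x, y)) : HasDerivAt (fun t => f (t, y)) (pdx f (x, y)) x :=
  hf.hasFDerivAt.comp_hasDerivAt x ((hasDerivAt_id x).prodMk (hasDerivAt_const x y))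

lemma DifferentiableAt.hasDerivAt_pdy {f : ℝ × ℝ → ℝ} {x y : ℝ}
    (hf : DifferentiableAt ℝ f (x, y)) : HasDerivAt (fun t => f (x, t)) (pdy f (x, y)) y :=
  hf.hasFDerivAt.comp_hasDerivAt y ((hasDerivAt_const y x).prodMk (hasDerivAt_id y))

lemma pdy_eq_pdx_comp_swap (f : ℝ × ℝ → ℝ) (p : ℝ × ℝ) :
    pdy f p = pdx (f ∘ Prod.swap) p.swap := by
  have := (ContinuousLinearEquiv.prodComm ℝ ℝ ℝ).comp_right_fderiv (f := f) (x := p.swap)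
  rw [pdx, pdy, show f ∘ Prod.swap = f ∘ ContinuousLinearEquiv.prodComm ℝ ℝ ℝ from rfl, this]
  rfl

lemma pdy_pdx_eq_pdx_pdy {f : ℝ × ℝ → ℝ} (hf : ContDiff ℝ 2 f) (p : ℝ × ℝ) :
    pdy (pdx f) p = pdx (pdy f) p := by
  have hd : DifferentiableAt ℝ (fderiv ℝ f) p :=
    ((hf.fderiv_right (m := 1) (by norm_num)).differentiable (by norm_num)).differentiableAt
  have hsymm : IsSymmSndFDerivAt ℝ f p := hf.contDiffAt.isSymmSndFDerivAt (by simp)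
  have hclm (v w : ℝ × ℝ) :
      fderiv ℝ (fun q => fderiv ℝ f q v) p w = fderiv ℝ (fderiv ℝ f) p w v := by
    simp [fderiv_clm_apply hd (differentiableAt_const v)]
  exact (hclm _ _).trans ((hsymm.eq _ _).trans (hclm _ _).symm)

lemma pdx_add_four {f₁ f₂ f₃ f₄ : ℝ × ℝ → ℝ} (h₁ : Differentiable ℝ f₁)
    (h₂ : Differentiable ℝ f₂) (h₃ : Differentiable ℝ f₃) (h₄ : Differentiable ℝ f₄)
    (p : ℝ × ℝ) : pdx (fun q => f₁ q + f₂ q + f₃ q + f₄ q) p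
      = pdx f₁ p + pdx f₂ p + pdx f₃ p + pdx f₄ p := by
  simp only [pdx]
  rw [fderiv_fun_add (by fun_prop) (h₄ p), fderiv_fun_add (by fun_prop) (h₃ p),
    fderiv_fun_add (h₁ p) (h₂ p)]
  rfl

lemma pdy_add_four {f₁ f₂ f₃ f₄ : ℝ × ℝ → ℝ} (h₁ : Differentiable ℝ f₁)
    (h₂ : Differentiable ℝ f₂) (h₃ : Differentiable ℝ f₃) (h₄ : Differentiable ℝ f₄)
    (p : ℝ × ℝ) : pdy (fun q => f₁ q + f₂ q + f₃ q + f₄ q) p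
      = pdy f₁ p + pdy f₂ p + pdy f₃ p + pdy f₄ p := by
  simp only [pdy]
  rw [fderiv_fun_add (by fun_prop) (h₄ p), fderiv_fun_add (by fun_prop) (h₃ p),
    fderiv_fun_add (h₁ p) (h₂ p)]
  rfl

lemma pdx_sub {f g : ℝ × ℝ → ℝ} {p : ℝ × ℝ} (hf : DifferentiableAt ℝ f p)
    (hg : DifferentiableAt ℝ g p) : pdx (fun q => f q - g q) p = pdx f p - pdx g p := by
  simp [pdx, fderiv_fun_sub hf hg]

lemma hasFDerivAt_bilinear (a b c d : ℝ) (p : ℝ × ℝ) :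
    HasFDerivAt (fun q : ℝ × ℝ => a + b * q.1 + c * q.2 + d * (q.1 * q.2))
      ((b + d * p.2) • ContinuousLinearMap.fst ℝ ℝ ℝ
        + (c + d * p.1) • ContinuousLinearMap.snd ℝ ℝ ℝ) p := by
  have h1 := hasFDerivAt_fst (𝕜 := ℝ) (E := ℝ) (F := ℝ) (p := p)
  have h2 := hasFDerivAt_snd (𝕜 := ℝ) (E := ℝ) (F := ℝ) (p := p)
  refine ((((hasFDerivAt_const a p).add (h1.const_mul b)).add (h2.const_mul c)).add
    ((h1.mul h2).const_mul d)).congr_fderiv ?_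
  ext <;> simp

def IsCornerInterpolant (u uI : ℝ × ℝ → ℝ) (x0 x1 y0 y1 : ℝ) : Prop :=
  IsBilinearOn uI (Icc x0 x1 ×ˢ Icc y0 y1) ∧
    ∀ x ∈ ({x0, x1} : Set ℝ), ∀ y ∈ ({y0, y1} : Set ℝ), uI (x, y) = u (x, y)

section CornerInterpolant

variable {u uI : ℝ × ℝ → ℝ} {x0 x1 y0 y1 M : ℝ} {p : ℝ × ℝ}

lemma IsCornerInterpolant.comp_swap (h : IsCornerInterpolant u uI x0 x1 y0 y1) :
    IsCornerInterpolant (u ∘ Prod.swap) (uI ∘ Prod.swap) y0 y1 x0 x1 := by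
  obtain ⟨⟨a, b, c, d, hf⟩, hc⟩ := h
  refine ⟨⟨a, c, b, d, fun q hq => ?_⟩, fun y hy x hx => hc x hx y hy⟩
  rw [Function.comp_apply, hf q.swap (by simpa [and_comm] using hq)]
  simp only [Prod.fst_swap, Prod.snd_swap]
  ring

lemma add_mul_mem_uIcc {b d y0 y1 t : ℝ} (ht : t ∈ Icc y0 y1) :
    b + d * t ∈ uIcc (b + d * y0) (b + d * y1) := by
  rcases le_total 0 d with hd | hd
  · exact Icc_subset_uIcc ⟨by nlinarith [ht.1], by nlinarith [ht.2]⟩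
  · exact Icc_subset_uIcc' ⟨by nlinarith [ht.2], by nlinarith [ht.1]⟩

lemma IsCornerInterpolant.exists_pdx_mem_uIcc (hu : Differentiable ℝ u)
    (h : IsCornerInterpolant u uI x0 x1 y0 y1) (hx : x0 < x1)
    (hp : p ∈ Ioo x0 x1 ×ˢ Ioo y0 y1) :
    DifferentiableAt ℝ uI p ∧ ∃ q0 ∈ Icc x0 x1 ×ˢ Icc y0 y1, ∃ q1 ∈ Icc x0 x1 ×ˢ Icc y0 y1,
      pdx uI p ∈ uIcc (pdx u q0) (pdx u q1) := by
  obtain ⟨⟨a, b, c, d, hf⟩, hc⟩ := h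
  have hR : Ioo x0 x1 ×ˢ Ioo y0 y1 ⊆ Icc x0 x1 ×ˢ Icc y0 y1 :=
    prod_mono Ioo_subset_Icc_self Ioo_subset_Icc_self
  have hderiv := (hasFDerivAt_bilinear a b c d p).congr_of_eventuallyEq
    (Filter.mem_of_superset ((isOpen_Ioo.prod isOpen_Ioo).mem_nhds hp) fun q hq => hf q (hR hq))
  have hmvt (y : ℝ) (hy : y ∈ ({y0, y1} : Set ℝ)) (hy' : y ∈ Icc y0 y1) :
      ∃ ξ ∈ Ioo x0 x1, pdx u (ξ, y) = b + d * y := by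
    obtain ⟨ξ, hξ, hslope⟩ := exists_hasDerivAt_eq_slope (fun t => u (t, y))
      (fun t => pdx u (t, y)) hx (by have := hu.continuous; fun_prop)
      fun t _ => (hu (t, y)).hasDerivAt_pdx
    refine ⟨ξ, hξ, ?_⟩
    rw [hslope, ← hc x0 (by simp) y hy, ← hc x1 (by simp) y hy, hf (x0, y) ⟨⟨le_rfl, hx.le⟩, hy'⟩,
      hf (x1, y) ⟨⟨hx.le, le_rfl⟩, hy'⟩]
    field_simp [sub_ne_zero.2 hx.ne']
    ring
  have hy01 : y0 ≤ y1 := hp.2.1.le.trans hp.2.2.le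
  obtain ⟨ξ0, hξ0, h0⟩ := hmvt y0 (by simp) ⟨le_rfl, hy01⟩
  obtain ⟨ξ1, hξ1, h1⟩ := hmvt y1 (by simp) ⟨hy01, le_rfl⟩
  refine ⟨hderiv.differentiableAt, (ξ0, y0), ⟨Ioo_subset_Icc_self hξ0, le_rfl, hy01⟩,
    (ξ1, y1), ⟨Ioo_subset_Icc_self hξ1, hy01, le_rfl⟩, ?_⟩
  rw [show pdx uI p = b + d * p.2 by simp [pdx, hderiv.fderiv], h0, h1]
  exact add_mul_mem_uIcc (hR hp).2

lemma IsCornerInterpolant.abs_pdx_sub_le (hu : Differentiable ℝ u)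
    (h : IsCornerInterpolant u uI x0 x1 y0 y1) (hx : x0 < x1) (hp : p ∈ Ioo x0 x1 ×ˢ Ioo y0 y1)
    (hM : ∀ q ∈ Icc x0 x1 ×ˢ Icc y0 y1, |pdx u p - pdx u q| ≤ M) :
    |pdx (fun q => u q - uI q) p| ≤ M := by
  obtain ⟨hdiff, q0, hq0, q1, hq1, hmem⟩ := h.exists_pdx_mem_uIcc hu hx hp
  rw [pdx_sub (hu p) hdiff, mem_Icc_iff_abs_le]
  exact uIcc_subset_Icc (mem_Icc_iff_abs_le.1 (hM q0 hq0)) (mem_Icc_iff_abs_le.1 (hM q1 hq1)) hmem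

lemma IsCornerInterpolant.abs_pdy_sub_le (hu : Differentiable ℝ u)
    (h : IsCornerInterpolant u uI x0 x1 y0 y1) (hy : y0 < y1) (hp : p ∈ Ioo x0 x1 ×ˢ Ioo y0 y1)
    (hM : ∀ q ∈ Icc x0 x1 ×ˢ Icc y0 y1, |pdy u p - pdy u q| ≤ M) :
    |pdy (fun q => u q - uI q) p| ≤ M := by
  rw [pdy_eq_pdx_comp_swap]
  refine h.comp_swap.abs_pdx_sub_le (hu.comp (differentiable_snd.prodMk differentiable_fst)) hy
    (by simpa [and_comm] using hp) fun q hq => ?_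
  have := hM q.swap (by simpa [and_comm] using hq)
  rwa [pdy_eq_pdx_comp_swap, pdy_eq_pdx_comp_swap, Prod.swap_swap] at this

end CornerInterpolant

lemma abs_sub_le_of_hasDerivAt_of_mem_Icc {g g' : ℝ → ℝ} {a b M s t : ℝ}
    (hg : ∀ r ∈ Icc a b, HasDerivAt g (g' r) r) (hM : ∀ r ∈ Icc a b, |g' r| ≤ M)
    (hs : s ∈ Icc a b) (ht : t ∈ Icc a b) : |g s - g t| ≤ M * (b - a) :=
  (Convex.norm_image_sub_le_of_norm_hasDerivWithin_le (fun r hr => (hg r hr).hasDerivWithinAt)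
    hM (convex_Icc a b) ht hs).trans
    (mul_le_mul_of_nonneg_left (Real.dist_le_of_mem_Icc hs ht) ((abs_nonneg _).trans (hM s hs)))

lemma abs_pdx_sub_pdx_le {g : ℝ × ℝ → ℝ} (hg : ContDiff ℝ 2 g) {x0 x1 y0 y1 Mxx Mxy : ℝ}
    (hMxx : ∀ q ∈ Icc x0 x1 ×ˢ Icc y0 y1, |pdx (pdx g) q| ≤ Mxx)
    (hMxy : ∀ q ∈ Icc x0 x1 ×ˢ Icc y0 y1, |pdx (pdy g) q| ≤ Mxy)
    {p q : ℝ × ℝ} (hp : p ∈ Icc x0 x1 ×ˢ Icc y0 y1) (hq : q ∈ Icc x0 x1 ×ˢ Icc y0 y1) :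
    |pdx g p - pdx g q| ≤ Mxx * (x1 - x0) + Mxy * (y1 - y0) := by
  have hg' : Differentiable ℝ (pdx g) :=
    ((hg.fderiv_right (m := 1) (by norm_num)).clm_apply contDiff_const).differentiable
      (by norm_num)
  have hx : |pdx g (p.1, p.2) - pdx g (q.1, p.2)| ≤ Mxx * (x1 - x0) :=
    abs_sub_le_of_hasDerivAt_of_mem_Icc (fun t _ => (hg' (t, p.2)).hasDerivAt_pdx)
      (fun t ht => hMxx (t, p.2) ⟨ht, hp.2⟩) hp.1 hq.1
  have hy : |pdx g (q.1, p.2) - pdx g (q.1, q.2)| ≤ Mxy * (y1 - y0) :=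
    abs_sub_le_of_hasDerivAt_of_mem_Icc
      (fun t _ => pdy_pdx_eq_pdx_pdy hg (q.1, t) ▸ (hg' (q.1, t)).hasDerivAt_pdy)
      (fun t ht => hMxy (q.1, t) ⟨hq.1, ht⟩) hp.2 hq.2
  calc |pdx g p - pdx g q|
      ≤ |pdx g (p.1, p.2) - pdx g (q.1, p.2)| + |pdx g (q.1, p.2) - pdx g (q.1, q.2)| :=
        abs_sub_le _ _ _
    _ ≤ Mxx * (x1 - x0) + Mxy * (y1 - y0) := add_le_add hx hy

def layerWeightX (β ε x : ℝ) : ℝ := Real.exp (-β * (1 - x) / ε)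

def layerWeightY (ε y : ℝ) : ℝ := Real.exp (-y / Real.sqrt ε) + Real.exp (-(1 - y) / Real.sqrt ε)

lemma layerWeightX_nonneg (β ε x : ℝ) : 0 ≤ layerWeightX β ε x := (Real.exp_pos _).le

lemma layerWeightY_nonneg (ε y : ℝ) : 0 ≤ layerWeightY ε y := by
  unfold layerWeightY; positivity

lemma layerWeightX_le_exp_mul {β ε x x' d : ℝ} (hβ : 0 ≤ β) (hε : 0 < ε) (hx : x ≤ x' + d) :
    layerWeightX β ε x ≤ Real.exp (β * d / ε) * layerWeightX β ε x' := by
  rw [layerWeightX, layerWeightX, ← Real.exp_add, Real.exp_le_exp, ← add_div,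
    div_le_div_iff_of_pos_right hε]
  nlinarith

lemma layerWeightY_le_two_mul_exp {ε a y : ℝ} (h1 : a ≤ y) (h2 : y ≤ 1 - a) :
    layerWeightY ε y ≤ 2 * Real.exp (-a / Real.sqrt ε) := by
  have hmono {t} (ht : a ≤ t) : Real.exp (-t / Real.sqrt ε) ≤ Real.exp (-a / Real.sqrt ε) :=
    Real.exp_le_exp.2 (div_le_div_of_nonneg_right (by linarith) (Real.sqrt_nonneg ε))
  rw [layerWeightY, two_mul]
  exact add_le_add (hmono h1) (hmono (by linarith))

section LayerBounds

variable {ε β C0 W δ x0 x1 y0 y1 : ℝ} {S E1 E2 E12 : ℝ × ℝ → ℝ} {p q : ℝ × ℝ}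

lemma rpow_neg_one_half (hε : 0 ≤ ε) : ε ^ (-(1 / 2 : ℝ)) = (Real.sqrt ε)⁻¹ := by
  rw [Real.rpow_neg hε, Real.sqrt_eq_rpow]

lemma BoundS.abs_pdx_le (h : BoundS C0 S) (hq : q ∈ UnitSq) : |pdx S q| ≤ C0 :=
  h.2 1 0 (by norm_num) q hq

lemma BoundS.abs_pdy_le (h : BoundS C0 S) (hq : q ∈ UnitSq) : |pdy S q| ≤ C0 :=
  h.2 0 1 (by norm_num) q hq

lemma BoundE1.abs_pdy_le (h : BoundE1 ε β C0 E1) (hq : q ∈ UnitSq) :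
    |pdy E1 q| ≤ C0 * layerWeightX β ε q.1 := by
  have := h.2 0 1 (by norm_num) q hq
  rwa [Nat.cast_zero, neg_zero, Real.rpow_zero, mul_one] at this

lemma BoundE1.abs_pdx_pdx_le (h : BoundE1 ε β C0 E1) (hε : 0 ≤ ε) (hq : q ∈ UnitSq) :
    |pdx (pdx E1) q| ≤ C0 / ε ^ 2 * layerWeightX β ε q.1 := by
  have := h.2 2 0 (by norm_num) q hq
  rwa [Real.rpow_neg hε, Nat.cast_ofNat, Real.rpow_two, ← div_eq_mul_inv] at this

lemma BoundE1.abs_pdx_pdy_le (h : BoundE1 ε β C0 E1) (hq : q ∈ UnitSq) :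
    |pdx (pdy E1) q| ≤ C0 / ε * layerWeightX β ε q.1 := by
  have := h.2 1 1 (by norm_num) q hq
  rwa [Nat.cast_one, Real.rpow_neg_one, ← div_eq_mul_inv] at this

lemma BoundE2.abs_pdx_le (h : BoundE2 ε C0 E2) (hq : q ∈ UnitSq) :
    |pdx E2 q| ≤ C0 * layerWeightY ε q.2 := by
  have := h.2 1 0 (by norm_num) q hq
  rwa [Nat.cast_zero, neg_zero, zero_div, Real.rpow_zero, mul_one] at this

lemma BoundE2.abs_pdy_le (h : BoundE2 ε C0 E2) (hε : 0 ≤ ε) (hq : q ∈ UnitSq) :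
    |pdy E2 q| ≤ C0 / Real.sqrt ε * layerWeightY ε q.2 := by
  have := h.2 0 1 (by norm_num) q hq
  rwa [Nat.cast_one, neg_div, rpow_neg_one_half hε, ← div_eq_mul_inv] at this

lemma BoundE12.abs_pdx_le (h : BoundE12 ε β C0 E12) (hq : q ∈ UnitSq) :
    |pdx E12 q| ≤ C0 / ε * layerWeightX β ε q.1 * layerWeightY ε q.2 := by
  have := h.2 1 0 (by norm_num) q hq
  rwa [Nat.cast_zero, Nat.cast_one, zero_div, add_zero, Real.rpow_neg_one,
    ← div_eq_mul_inv] at this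

lemma BoundE12.abs_pdy_le (h : BoundE12 ε β C0 E12) (hε : 0 ≤ ε) (hq : q ∈ UnitSq) :
    |pdy E12 q| ≤ C0 / Real.sqrt ε * layerWeightX β ε q.1 * layerWeightY ε q.2 := by
  have := h.2 0 1 (by norm_num) q hq
  rwa [Nat.cast_zero, Nat.cast_one, zero_add, rpow_neg_one_half hε, ← div_eq_mul_inv] at this

lemma abs_pdx_sub_pdx_le_of_layerBounds (hε : 0 < ε) (hC0 : 0 ≤ C0)
    (hS : BoundS C0 S) (hE1 : BoundE1 ε β C0 E1) (hE2 : BoundE2 ε C0 E2)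
    (hE12 : BoundE12 ε β C0 E12) (hR : Icc x0 x1 ×ˢ Icc y0 y1 ⊆ UnitSq)
    (hW : ∀ r ∈ Icc x0 x1 ×ˢ Icc y0 y1, layerWeightX β ε r.1 ≤ W)
    (hδ : ∀ r ∈ Icc x0 x1 ×ˢ Icc y0 y1, layerWeightY ε r.2 ≤ δ)
    (hp : p ∈ Icc x0 x1 ×ˢ Icc y0 y1) (hq : q ∈ Icc x0 x1 ×ˢ Icc y0 y1) :
    |pdx (fun r => S r + E1 r + E2 r + E12 r) p - pdx (fun r => S r + E1 r + E2 r + E12 r) q|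
      ≤ C0 * (2 + 2 * δ) + C0 * W * ((x1 - x0) / ε ^ 2 + (y1 - y0) / ε + 2 * δ / ε) := by
  have hW0 : 0 ≤ W := (layerWeightX_nonneg _ _ _).trans (hW p hp)
  have bE1 : |pdx E1 p - pdx E1 q| ≤ C0 / ε ^ 2 * W * (x1 - x0) + C0 / ε * W * (y1 - y0) :=
    abs_pdx_sub_pdx_le (hE1.1.of_le (by norm_num))
      (fun r hr => (hE1.abs_pdx_pdx_le hε.le (hR hr)).trans (by gcongr; exact hW r hr))
      (fun r hr => (hE1.abs_pdx_pdy_le (hR hr)).trans (by gcongr; exact hW r hr)) hp hq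
  have bE2 (r) (hr : r ∈ Icc x0 x1 ×ˢ Icc y0 y1) : |pdx E2 r| ≤ C0 * δ :=
    (hE2.abs_pdx_le (hR hr)).trans (by gcongr; exact hδ r hr)
  have bE12 (r) (hr : r ∈ Icc x0 x1 ×ˢ Icc y0 y1) : |pdx E12 r| ≤ C0 / ε * W * δ :=
    (hE12.abs_pdx_le (hR hr)).trans (by gcongr; exacts [layerWeightY_nonneg _ _, hW r hr, hδ r hr])
  have hd {F : ℝ × ℝ → ℝ} (hF : ContDiff ℝ 3 F) : Differentiable ℝ F :=
    hF.differentiable (by norm_num)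
  rw [pdx_add_four (hd hS.1) (hd hE1.1) (hd hE2.1) (hd hE12.1),
    pdx_add_four (hd hS.1) (hd hE1.1) (hd hE2.1) (hd hE12.1)]
  calc _ = |(pdx S p - pdx S q) + (pdx E1 p - pdx E1 q) + (pdx E2 p - pdx E2 q)
        + (pdx E12 p - pdx E12 q)| := by ring_nf
    _ ≤ |pdx S p - pdx S q| + |pdx E1 p - pdx E1 q| + |pdx E2 p - pdx E2 q|
        + |pdx E12 p - pdx E12 q| :=
        (abs_add_le _ _).trans (add_le_add_left (abs_add_three _ _ _) _)
    _ ≤ (C0 + C0) + (C0 / ε ^ 2 * W * (x1 - x0) + C0 / ε * W * (y1 - y0))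
        + (C0 * δ + C0 * δ) + (C0 / ε * W * δ + C0 / ε * W * δ) := by
        gcongr
        · exact (abs_sub _ _).trans (add_le_add (hS.abs_pdx_le (hR hp)) (hS.abs_pdx_le (hR hq)))
        · exact (abs_sub _ _).trans (add_le_add (bE2 p hp) (bE2 q hq))
        · exact (abs_sub _ _).trans (add_le_add (bE12 p hp) (bE12 q hq))
    _ = _ := by ring

lemma abs_pdy_le_of_layerBounds (hε : 0 < ε) (hC0 : 0 ≤ C0)
    (hS : BoundS C0 S) (hE1 : BoundE1 ε β C0 E1) (hE2 : BoundE2 ε C0 E2)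
    (hE12 : BoundE12 ε β C0 E12) (hq : q ∈ UnitSq)
    (hW : layerWeightX β ε q.1 ≤ W) (hδ : layerWeightY ε q.2 ≤ δ) :
    |pdy (fun r => S r + E1 r + E2 r + E12 r) q|
      ≤ C0 * (1 + δ / Real.sqrt ε) + C0 * W * (1 + δ / Real.sqrt ε) := by
  have hW0 : 0 ≤ W := (layerWeightX_nonneg _ _ _).trans hW
  have hd {F : ℝ × ℝ → ℝ} (hF : ContDiff ℝ 3 F) : Differentiable ℝ F :=
    hF.differentiable (by norm_num)
  rw [pdy_add_four (hd hS.1) (hd hE1.1) (hd hE2.1) (hd hE12.1)]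
  calc _ ≤ |pdy S q| + |pdy E1 q| + |pdy E2 q| + |pdy E12 q| :=
        (abs_add_le _ _).trans (add_le_add_left (abs_add_three _ _ _) _)
    _ ≤ C0 + C0 * W + C0 / Real.sqrt ε * δ + C0 / Real.sqrt ε * W * δ := by
        gcongr
        · exact hS.abs_pdy_le hq
        · exact (hE1.abs_pdy_le hq).trans (by gcongr)
        · exact (hE2.abs_pdy_le hε.le hq).trans (by gcongr)
        · exact (hE12.abs_pdy_le hε.le hq).trans (by gcongr; exact layerWeightY_nonneg _ _)
    _ = _ := by ring

lemma abs_grad_sub_interp_le_of_layerBounds {u uI : ℝ × ℝ → ℝ} (hε : 0 < ε) (hC0 : 0 ≤ C0)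
    (hS : BoundS C0 S) (hE1 : BoundE1 ε β C0 E1) (hE2 : BoundE2 ε C0 E2)
    (hE12 : BoundE12 ε β C0 E12) (hu : ∀ r, u r = S r + E1 r + E2 r + E12 r)
    (hI : IsCornerInterpolant u uI x0 x1 y0 y1) (hR : Icc x0 x1 ×ˢ Icc y0 y1 ⊆ UnitSq)
    (hW : ∀ r ∈ Icc x0 x1 ×ˢ Icc y0 y1, layerWeightX β ε r.1 ≤ W)
    (hδ : ∀ r ∈ Icc x0 x1 ×ˢ Icc y0 y1, layerWeightY ε r.2 ≤ δ)
    (hp : p ∈ Ioo x0 x1 ×ˢ Ioo y0 y1) :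
    |pdx (fun r => u r - uI r) p| + |pdy (fun r => u r - uI r) p|
      ≤ C0 * (2 + 2 * δ) + C0 * W * ((x1 - x0) / ε ^ 2 + (y1 - y0) / ε + 2 * δ / ε)
        + 2 * (C0 * (1 + δ / Real.sqrt ε) + C0 * W * (1 + δ / Real.sqrt ε)) := by
  obtain rfl : u = fun r => S r + E1 r + E2 r + E12 r := funext hu
  have hu' : Differentiable ℝ fun r => S r + E1 r + E2 r + E12 r :=
    (((hS.1.add hE1.1).add hE2.1).add hE12.1).differentiable (by norm_num)
  have hp' : p ∈ Icc x0 x1 ×ˢ Icc y0 y1 := prod_mono Ioo_subset_Icc_self Ioo_subset_Icc_self hp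
  have hy (r) (hr : r ∈ Icc x0 x1 ×ˢ Icc y0 y1) := abs_pdy_le_of_layerBounds hε hC0 hS hE1 hE2 hE12
    (hR hr) (hW r hr) (hδ r hr)
  refine add_le_add (hI.abs_pdx_sub_le hu' (hp.1.1.trans hp.1.2) hp fun q hq =>
    abs_pdx_sub_pdx_le_of_layerBounds hε hC0 hS hE1 hE2 hE12 hR hW hδ hp' hq) ?_
  exact hI.abs_pdy_sub_le hu' (hp.2.1.trans hp.2.2) hp fun q hq =>
    (abs_sub _ _).trans ((add_le_add (hy p hp') (hy q hq)).trans_eq (two_mul _).symm)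

end LayerBounds

section Mesh

variable {N K m : ℕ} {lx ly : ℝ}

lemma meshX_add_of_eq_two_mul (hK : N = 2 * K) (hK0 : 0 < K) (hm : m ≤ K) :
    meshX N lx (K + m) = 1 - lx + m * (2 * lx / N) := by
  subst hK
  have hK' : (K : ℝ) ≠ 0 := by positivity
  rcases Nat.eq_zero_or_pos m with rfl | hm0
  · rw [meshX, if_pos (by omega)]
    push_cast
    field_simp
    ring
  · rw [meshX, if_neg (by omega)]
    push_cast
    field_simp
    ring

lemma meshY_add_of_eq_three_mul (hK : N = 3 * K) (hK0 : 0 < K) (hm : m ≤ K) :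
    meshY N ly (K + m) = ly + m * (3 * (1 - 2 * ly) / N) := by
  subst hK
  have hK' : (K : ℝ) ≠ 0 := by positivity
  rcases Nat.eq_zero_or_pos m with rfl | hm0
  · rw [meshY, if_pos (by omega)]
    push_cast
    field_simp
    ring
  · rw [meshY, if_neg (by omega), if_pos (by omega)]
    push_cast
    field_simp
    ring

end Mesh

lemma exists_mem_Ioo_of_ne_nodes {a h t : ℝ} {n : ℕ} (hh : 0 < h) (ha : a ≤ t)
    (hn : t ≤ a + n * h) (hne : ∀ m ≤ n, t ≠ a + m * h) :
    ∃ m < n, t ∈ Ioo (a + m * h) (a + m * h + h) := by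
  set m := ⌊(t - a) / h⌋₊
  have hm : m * h ≤ t - a := (le_div_iff₀ hh).1 (Nat.floor_le (div_nonneg (sub_nonneg.2 ha) hh.le))
  have hm1 : t - a < (m + 1) * h := (div_lt_iff₀ hh).1 (Nat.lt_floor_add_one _)
  have hmn : m ≤ n := Nat.floor_le_of_le ((div_le_iff₀ hh).2 (by linarith))
  have hlt : a + m * h < t := lt_of_le_of_ne (by linarith) (hne m hmn).symm
  refine ⟨m, lt_of_le_of_ne hmn fun h' => ?_, hlt, by linarith⟩
  rw [h'] at hlt
  linarith

lemma volume_setOf_fst_or_snd_mem_range (xs ys : ℕ → ℝ) :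
    volume {p : ℝ × ℝ | (∃ i, p.1 = xs i) ∨ ∃ j, p.2 = ys j} = 0 := by
  have hx : volume (range xs) = 0 := (countable_range xs).measure_zero volume
  have hy : volume (range ys) = 0 := (countable_range ys).measure_zero volume
  refine measure_mono_null (t := range xs ×ˢ univ ∪ univ ×ˢ range ys) ?_ ?_
  · rintro p (⟨i, hi⟩ | ⟨j, hj⟩)
    exacts [Or.inl ⟨⟨i, hi.symm⟩, trivial⟩, Or.inr ⟨trivial, ⟨j, hj.symm⟩⟩]
  · rw [measure_union_null_iff, Measure.volume_eq_prod, Measure.prod_prod, Measure.prod_prod,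
      hx, hy, zero_mul, mul_zero]
    exact ⟨rfl, rfl⟩

lemma IsMeshInterpolant.exists_cell {N : ℕ} {lx ly : ℝ} {u uI : ℝ × ℝ → ℝ} {p : ℝ × ℝ}
    (hI : IsMeshInterpolant N lx ly u uI) (hN : 0 < N) (h6 : 6 ∣ N) (hlx : 0 < lx)
    (hly : 2 * ly < 1) (hp : p ∈ Omega1R lx ly) (hpx : ∀ i, p.1 ≠ meshX N lx i)
    (hpy : ∀ j, p.2 ≠ meshY N ly j) :
    ∃ x0 y0, p ∈ Ioo x0 (x0 + 2 * lx / N) ×ˢ Ioo y0 (y0 + 3 * (1 - 2 * ly) / N) ∧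
      Icc x0 (x0 + 2 * lx / N) ×ˢ Icc y0 (y0 + 3 * (1 - 2 * ly) / N) ⊆ Omega1R lx ly ∧
      IsCornerInterpolant u uI x0 (x0 + 2 * lx / N) y0 (y0 + 3 * (1 - 2 * ly) / N) := by
  obtain ⟨M, rfl⟩ := h6
  have hM : 0 < M := by omega
  set hx : ℝ := 2 * lx / ((6 * M : ℕ) : ℝ)
  set hy : ℝ := 3 * (1 - 2 * ly) / ((6 * M : ℕ) : ℝ)
  have hx0 : 0 < hx := by positivity
  have hy0 : 0 < hy := div_pos (by linarith) (by positivity)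
  have hxM : ((3 * M : ℕ) : ℝ) * hx = lx := by simp only [hx]; push_cast; field_simp; ring
  have hyM : ((2 * M : ℕ) : ℝ) * hy = 1 - 2 * ly := by simp only [hy]; push_cast; field_simp; ring
  have hX (m : ℕ) (hm : m ≤ 3 * M) : meshX (6 * M) lx (3 * M + m) = 1 - lx + m * hx :=
    meshX_add_of_eq_two_mul (by ring) (by omega) hm
  have hY (m : ℕ) (hm : m ≤ 2 * M) : meshY (6 * M) ly (2 * M + m) = ly + m * hy :=
    meshY_add_of_eq_three_mul (by ring) (by omega) hm
  obtain ⟨mx, hmx, hpx'⟩ := exists_mem_Ioo_of_ne_nodes hx0 hp.1.1 (by linarith [hp.1.2])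
    fun m hm h => hpx _ (h.trans (hX m hm).symm)
  obtain ⟨my, hmy, hpy'⟩ := exists_mem_Ioo_of_ne_nodes hy0 hp.2.1 (by linarith [hp.2.2])
    fun m hm h => hpy _ (h.trans (hY m hm).symm)
  have hX1 : meshX (6 * M) lx (3 * M + mx + 1) = 1 - lx + mx * hx + hx := by
    rw [add_assoc, hX (mx + 1) hmx]; push_cast; ring
  have hY1 : meshY (6 * M) ly (2 * M + my + 1) = ly + my * hy + hy := by
    rw [add_assoc, hY (my + 1) hmy]; push_cast; ring
  have hmx' : ((mx : ℕ) : ℝ) + 1 ≤ ((3 * M : ℕ) : ℝ) := by exact_mod_cast hmx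
  have hmy' : ((my : ℕ) : ℝ) + 1 ≤ ((2 * M : ℕ) : ℝ) := by exact_mod_cast hmy
  refine ⟨_, _, ⟨hpx', hpy'⟩, ?_, ⟨?_, ?_⟩⟩
  · rintro q ⟨⟨hq1, hq2⟩, hq3, hq4⟩
    refine ⟨⟨?_, ?_⟩, ?_, ?_⟩ <;> nlinarith
  · have := hI.2.1 (3 * M + mx + 1) (2 * M + my + 1) (by omega) (by omega) (by omega) (by omega)
    rwa [meshRect, Nat.add_sub_cancel, Nat.add_sub_cancel, hX mx hmx.le, hY my hmy.le, hX1,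
      hY1] at this
  · rintro x (rfl | rfl) y (rfl | rfl)
    · rw [← hX mx hmx.le, ← hY my hmy.le]; exact hI.2.2 _ _ (by omega) (by omega)
    · rw [← hX mx hmx.le, ← hY1]; exact hI.2.2 _ _ (by omega) (by omega)
    · rw [← hX1, ← hY my hmy.le]; exact hI.2.2 _ _ (by omega) (by omega)
    · rw [← hX1, ← hY1]; exact hI.2.2 _ _ (by omega) (by omega)

lemma integral_Omega1R_layer_le {a b β ε lx ly : ℝ} (ha : 0 ≤ a) (hb : 0 ≤ b) (hβ : 0 < β)
    (hε : 0 < ε) (hlx : 0 ≤ lx) (hly : 0 ≤ ly) (hly' : 2 * ly ≤ 1) :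
    ∫ p in Omega1R lx ly, (a + b * layerWeightX β ε p.1) ≤ a * lx + b * (ε / β) := by
  have hF (x : ℝ) : HasDerivAt (fun t => a * t + b * (ε / β) * layerWeightX β ε t)
      (a + b * layerWeightX β ε x) x := by
    have h := ((((hasDerivAt_id x).const_sub 1).const_mul (-β)).div_const ε).exp
    refine (((hasDerivAt_id x).const_mul a).add (h.const_mul (b * (ε / β)))).congr_deriv ?_
    simp only [layerWeightX, id]
    field_simp
  have hx : ∫ x in Icc (1 - lx) 1, (a + b * layerWeightX β ε x)
      = a * lx + b * (ε / β) * (1 - layerWeightX β ε (1 - lx)) := by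
    rw [integral_Icc_eq_integral_Ioc, ← intervalIntegral.integral_of_le (by linarith),
      intervalIntegral.integral_eq_sub_of_hasDerivAt (fun x _ => hF x)
        (Continuous.intervalIntegrable (by unfold layerWeightX; fun_prop) _ _)]
    simp only [layerWeightX, sub_self, mul_zero, zero_div, Real.exp_zero]
    ring
  have hy : ∫ _ in Icc ly (1 - ly), (1 : ℝ) = 1 - 2 * ly := by
    rw [setIntegral_const, smul_eq_mul, mul_one, measureReal_def, Real.volume_Icc,
      ENNReal.toReal_ofReal (by linarith)]
    ring
  have hprod := setIntegral_prod_mul (μ := volume) (ν := volume)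
    (fun x => a + b * layerWeightX β ε x) (fun _ => (1 : ℝ)) (Icc (1 - lx) 1) (Icc ly (1 - ly))
  simp only [mul_one, ← Measure.volume_eq_prod] at hprod
  rw [Omega1R, hprod, hx, hy]
  have hw0 := layerWeightX_nonneg β ε (1 - lx)
  have hw1 : layerWeightX β ε (1 - lx) ≤ 1 :=
    Real.exp_le_one_iff.2 (div_nonpos_of_nonpos_of_nonneg (by nlinarith) hε.le)
  have hεβ : 0 ≤ b * (ε / β) := by positivity
  calc _ ≤ a * lx + b * (ε / β) * (1 - layerWeightX β ε (1 - lx)) :=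
        mul_le_of_le_one_right (by nlinarith) (by linarith)
    _ ≤ a * lx + b * (ε / β) := by nlinarith

lemma setIntegral_Omega1R_le_of_ae_le {f : ℝ × ℝ → ℝ} {a b β ε lx ly : ℝ} (hf : ∀ p, 0 ≤ f p)
    (hfb : ∀ᵐ p ∂volume.restrict (Omega1R lx ly), f p ≤ a + b * layerWeightX β ε p.1)
    (ha : 0 ≤ a) (hb : 0 ≤ b) (hβ : 0 < β) (hε : 0 < ε) (hlx : 0 ≤ lx) (hly : 0 ≤ ly)
    (hly' : 2 * ly ≤ 1) : ∫ p in Omega1R lx ly, f p ≤ a * lx + b * (ε / β) := by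
  have hint : IntegrableOn (fun p : ℝ × ℝ => a + b * layerWeightX β ε p.1) (Omega1R lx ly) :=
    (Continuous.continuousOn (by unfold layerWeightX; fun_prop)).integrableOn_compact
      (isCompact_Icc.prod isCompact_Icc)
  exact (integral_mono_of_nonneg (.of_forall hf) hint hfb).trans
    (integral_Omega1R_layer_le ha hb hβ hε hlx hly hly')

lemma ShishkinHyp.one_le_log {n : ℕ} {ε β lx ly : ℝ} (h : ShishkinHyp n ε β lx ly) :
    1 ≤ Real.log n := by
  have h6 : (6 : ℝ) ≤ n := by exact_mod_cast Nat.le_of_dvd h.1 h.2.1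
  rw [Real.le_log_iff_exp_le (by linarith)]
  linarith [Real.exp_one_lt_d9]

lemma shishkin_cell_bound_le {N ε β L ly C0 W : ℝ} (hN : 1 ≤ N) (hε : 0 < ε) (hεN : ε ≤ N⁻¹)
    (hL : 1 ≤ L) (hly : 0 ≤ ly) (hC0 : 0 ≤ C0) (hW : 0 ≤ W) :
    C0 * (2 + 2 * (2 / N)) + C0 * W * (2 * (2.5 * ε / β * L) / N / ε ^ 2
        + 3 * (1 - 2 * ly) / N / ε + 2 * (2 / N) / ε)
      + 2 * (C0 * (1 + 2 / N / Real.sqrt ε) + C0 * W * (1 + 2 / N / Real.sqrt ε))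
      ≤ 12 * C0 * (ε * N)⁻¹ + C0 * W * ((5 / β + 13) * L * (ε * N)⁻¹) := by
  have hεN' : ε * N ≤ 1 := by
    calc ε * N ≤ N⁻¹ * N := by gcongr
      _ = 1 := inv_mul_cancel₀ (by positivity)
  have hε1 : ε ≤ 1 := hεN.trans (inv_le_one_of_one_le₀ hN)
  have h1 : 1 ≤ (ε * N)⁻¹ := (one_le_inv₀ (by positivity)).2 hεN'
  have h2 : N⁻¹ ≤ (ε * N)⁻¹ := inv_anti₀ (by positivity) (by nlinarith)
  have h3 : (Real.sqrt ε * N)⁻¹ ≤ (ε * N)⁻¹ := by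
    refine inv_anti₀ (by positivity) (mul_le_mul_of_nonneg_right ?_ (by linarith))
    exact (Real.le_sqrt hε.le hε.le).2 (by nlinarith)
  have h4 : 0 ≤ ly * (ε * N)⁻¹ := by positivity
  have h5 : (ε * N)⁻¹ ≤ L * (ε * N)⁻¹ := le_mul_of_one_le_left (by positivity) hL
  have e : 2 * (2.5 * ε / β * L) / N / ε ^ 2 = 5 / β * L * (ε * N)⁻¹ := by
    field_simp
    ring
  calc _ = C0 * (2 + 2 * (2 / N) + 2 * (1 + 2 / N / Real.sqrt ε)) + C0 * W *
        (2 * (2.5 * ε / β * L) / N / ε ^ 2 + 3 * (1 - 2 * ly) / N / ε + 2 * (2 / N) / ε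
          + 2 * (1 + 2 / N / Real.sqrt ε)) := by ring
    _ ≤ C0 * (12 * (ε * N)⁻¹) + C0 * W * ((5 / β + 13) * L * (ε * N)⁻¹) := by
        gcongr
        · linear_combination 4 * h1 + 4 * h2 + 4 * h3
        · linear_combination e + 6 * h4 + 2 * h1 + 4 * h3 + 13 * h5
    _ = _ := by ring

lemma Omega1R_subset_unitSq {lx ly : ℝ} (hlx : lx ≤ 1) (hly : 0 ≤ ly) :
    Omega1R lx ly ⊆ UnitSq := by
  rintro p ⟨⟨h1, h2⟩, h3, h4⟩
  exact ⟨⟨by linarith, h2⟩, by linarith, by linarith⟩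

lemma ShishkinHyp.abs_grad_sub_interp_le {N : ℕ} {ε β lx ly C0 : ℝ}
    {S E1 E2 E12 u uI : ℝ × ℝ → ℝ} {p : ℝ × ℝ} (hSh : ShishkinHyp N ε β lx ly) (hC0 : 0 ≤ C0)
    (hS : BoundS C0 S) (hE1 : BoundE1 ε β C0 E1) (hE2 : BoundE2 ε C0 E2)
    (hE12 : BoundE12 ε β C0 E12) (hu : ∀ r, u r = S r + E1 r + E2 r + E12 r)
    (hI : IsMeshInterpolant N lx ly u uI) (hp : p ∈ Omega1R lx ly)
    (hpx : ∀ i, p.1 ≠ meshX N lx i) (hpy : ∀ j, p.2 ≠ meshY N ly j) :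
    |pdx (fun r => u r - uI r) p| + |pdy (fun r => u r - uI r) p|
      ≤ 12 * C0 * (ε * N)⁻¹
        + C0 * ((5 / β + 13) * Real.log N * (ε * N)⁻¹) * Real.exp 5 * layerWeightX β ε p.1 := by
  have hL := hSh.one_le_log
  obtain ⟨hN, h6, hε, hεN, hβ, hlxdef, hlydef, hlx, hly⟩ := hSh
  have hN' : (1 : ℝ) ≤ N := by exact_mod_cast hN
  have hlx0 : 0 < lx := by rw [hlxdef]; positivity
  have hly0 : 0 < ly := by rw [hlydef]; positivity
  obtain ⟨x0, y0, hp', hsub, hcell⟩ := hI.exists_cell hN h6 hlx0 (by linarith) hp hpx hpy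
  have hW (r) (hr : r ∈ Icc x0 (x0 + 2 * lx / N) ×ˢ Icc y0 (y0 + 3 * (1 - 2 * ly) / N)) :
      layerWeightX β ε r.1 ≤ Real.exp 5 * layerWeightX β ε p.1 := by
    have hwidth : β * (2 * lx / N) / ε = 5 * (Real.log N / N) := by
      rw [hlxdef]; field_simp; ring
    have hlog : Real.log N / N ≤ 1 :=
      (div_le_one (by positivity)).2 (Real.log_le_self (by positivity))
    refine (layerWeightX_le_exp_mul (x' := p.1) (d := 2 * lx / N) hβ.le hε
      (by linarith [hr.1.2, hp'.1.1])).trans ?_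
    gcongr
    · exact layerWeightX_nonneg _ _ _
    · linarith
  have hδ (r) (hr : r ∈ Icc x0 (x0 + 2 * lx / N) ×ˢ Icc y0 (y0 + 3 * (1 - 2 * ly) / N)) :
      layerWeightY ε r.2 ≤ 2 / N := by
    have hr' := hsub hr
    have hdepth : -ly / Real.sqrt ε = -(2.5 * Real.log N) := by
      rw [hlydef]; field_simp
    calc _ ≤ 2 * Real.exp (-ly / Real.sqrt ε) := layerWeightY_le_two_mul_exp hr'.2.1 hr'.2.2
      _ ≤ 2 * Real.exp (-Real.log N) := by rw [hdepth]; gcongr; linarith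
      _ = 2 / N := by rw [Real.exp_neg, Real.exp_log (by positivity), div_eq_mul_inv]
  have key := abs_grad_sub_interp_le_of_layerBounds hε hC0 hS hE1 hE2 hE12 hu hcell
    (hsub.trans (Omega1R_subset_unitSq (by linarith) hly0.le)) hW hδ hp'
  rw [add_sub_cancel_left, add_sub_cancel_left, hlxdef] at key
  refine key.trans ((shishkin_cell_bound_le hN' hε hεN hL hly0.le hC0
    (mul_nonneg (Real.exp_pos 5).le (layerWeightX_nonneg _ _ _))).trans_eq ?_)
  ring

/-- `‖∇(u − u^I)‖_{L^1(Ω₁)} ≤ C N⁻¹ ln N`, with the gradient of the piecewise bilinear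
interpolant taken rectangle-by-rectangle. -/
theorem grad_interpolation_L1_Omega1 (β C0 : ℝ) (hβ : 0 < β) (hC0 : 0 < C0) :
    ∃ C : ℝ, 0 < C ∧
      ∀ (N : ℕ) (ε lx ly : ℝ) (S E1 E2 E12 u uI : ℝ × ℝ → ℝ),
        ShishkinHyp N ε β lx ly →
        BoundS C0 S → BoundE1 ε β C0 E1 → BoundE2 ε C0 E2 → BoundE12 ε β C0 E12 →
        (∀ p : ℝ × ℝ, u p = S p + E1 p + E2 p + E12 p) →
        IsMeshInterpolant N lx ly u uI →
        ∫ p in Omega1R lx ly,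
            (|pdx (fun q => u q - uI q) p| + |pdy (fun q => u q - uI q) p|)
          ≤ C * (N : ℝ)⁻¹ * Real.log (N : ℝ) := by
  refine ⟨C0 * (30 + Real.exp 5 * (5 / β + 13)) / β, by positivity, ?_⟩
  intro N ε lx ly S E1 E2 E12 u uI hSh hS hE1 hE2 hE12 hu hI
  have hlines := measure_eq_zero_iff_ae_notMem.1
    (volume_setOf_fst_or_snd_mem_range (meshX N lx) (meshY N ly))
  have hmaj : ∀ᵐ p ∂volume.restrict (Omega1R lx ly),
      |pdx (fun q => u q - uI q) p| + |pdy (fun q => u q - uI q) p|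
        ≤ 12 * C0 * (ε * N)⁻¹
          + C0 * ((5 / β + 13) * Real.log N * (ε * N)⁻¹) * Real.exp 5 * layerWeightX β ε p.1 := by
    filter_upwards [ae_restrict_mem (measurableSet_Icc.prod measurableSet_Icc),
      ae_restrict_of_ae hlines] with p hp hp'
    exact hSh.abs_grad_sub_interp_le hC0.le hS hE1 hE2 hE12 hu hI hp
      (fun i h => hp' (Or.inl ⟨i, h⟩)) fun j h => hp' (Or.inr ⟨j, h⟩)
  obtain ⟨hN, -, hε, -, -, hlxdef, hlydef, -, hly⟩ := hSh
  refine (setIntegral_Omega1R_le_of_ae_le (fun _ => by positivity) hmaj (by positivity)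
    (by positivity) hβ hε (by rw [hlxdef]; positivity) (by rw [hlydef]; positivity)
    (by linarith)).trans_eq ?_
  rw [hlxdef]
  field_simp
  ring
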